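/- arXiv:0901.0682 — 3 statements merged into one kernel-verified Lean document; each statement's English description precedes it below -/
import Mathlib

section
/- Let K be a finite totally ramified extension of F = Frac W(k) of ramification index e, π a uniformizer of K, and π_n a p^n-th root of π. Let a_1, ..., a_{p^n-1} ∈ K and ζ a primitive p^n-th root of unity. Then for indices i, j in {1, ..., p^n - 1}, the equality v(a_i π_n^i (ζ^i - 1)) = v(a_j π_n^j (ζ^j - 1)) (with both sides finite) implies i = j. Here v is normalized by v(p) = 1. -/
/-!
Write `s = v_p(l)`. Then `ζ ^ l` is a primitive `p ^ (n - s)`-th root of unity, and since the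
product of `1 - μ` over the primitive `p ^ k`-th roots `μ` is `Φ_{p^k}(1) = p`, with all factors
of the same valuation, `v (ζ ^ l - 1) = p ^ (s + 1) / (p ^ n (p - 1))`. Hence
`e p ^ n (p - 1) · v (a_l π_n ^ l (ζ ^ l - 1)) = (p - 1)(m p ^ n + l) + e p ^ (s + 1)` for some
integer `m`, as `v (a_l) ∈ ℤ / e`. If two indices `i, j` give the same value and
`v_p(i) < v_p(j)`, reducing modulo `p ^ (v_p(i) + 1)` gives `p ^ (v_p(i) + 1) ∣ i`, which is
absurd; if `v_p(i) = v_p(j)`, then `p ^ n ∣ i - j`, so `i = j`.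
-/

open Finset Polynomial

theorem IsPrimitiveRoot.pow_prime_pow_factorization {M : Type*} [CommMonoid M] {ζ : M}
    {p n l : ℕ} (hp : p.Prime) (hζ : IsPrimitiveRoot ζ (p ^ n)) (hl : l ≠ 0)
    (hs : l.factorization p ≤ n) : IsPrimitiveRoot (ζ ^ l) (p ^ (n - l.factorization p)) := by
  have h := (hζ.pow (pow_pos hp.pos n) (pow_mul_pow_sub p hs).symm).pow_of_coprime _
    ((Nat.coprime_ordCompl hp hl).pow_left _).symm
  rwa [← pow_mul, Nat.ordProj_mul_ordCompl_eq_self] at h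

theorem Nat.factorization_lt_of_lt_pow {p n l : ℕ} (hp : 1 < p) (hl : l ≠ 0) (h : l < p ^ n) :
    l.factorization p < n :=
  (Nat.pow_lt_pow_iff_right hp).1
    ((Nat.le_of_dvd (Nat.pos_of_ne_zero hl) (Nat.ordProj_dvd l p)).trans_lt h)

structure IsERealValuation {A : Type*} [Field A] (v : A → EReal) : Prop where
  map_zero : v 0 = ⊤
  ne_top : ∀ x, x ≠ 0 → v x ≠ ⊤
  ne_bot : ∀ x, v x ≠ ⊥
  map_mul : ∀ x y, v (x * y) = v x + v y
  min_le_map_add : ∀ x y, min (v x) (v y) ≤ v (x + y)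

namespace IsERealValuation

variable {A : Type*} [Field A] {v : A → EReal}

theorem exists_eq_coe (hv : IsERealValuation v) {x : A} (hx : x ≠ 0) : ∃ r : ℝ, v x = r :=
  ⟨(v x).toReal, (EReal.coe_toReal (hv.ne_top x hx) (hv.ne_bot x)).symm⟩

theorem map_one (hv : IsERealValuation v) : v 1 = 0 := by
  obtain ⟨r, hr⟩ := hv.exists_eq_coe one_ne_zero
  have h := hv.map_mul 1 1
  rw [mul_one, hr, ← EReal.coe_add, EReal.coe_eq_coe_iff] at h
  rw [hr, EReal.coe_eq_zero]
  linarith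

theorem map_pow_of_eq_coe (hv : IsERealValuation v) {x : A} {r : ℝ} (hx : v x = r) (k : ℕ) :
    v (x ^ k) = ((k * r : ℝ) : EReal) := by
  induction k with
  | zero => simpa using hv.map_one
  | succ k ih =>
    rw [pow_succ, hv.map_mul, ih, hx, ← EReal.coe_add]
    congr 1
    push_cast
    ring

theorem map_eq_div_of_pow_eq (hv : IsERealValuation v) {x y : A} {k : ℕ} (hk : k ≠ 0)
    (hxy : x ^ k = y) {r : ℝ} (hy : v y = r) : v x = ((r / k : ℝ) : EReal) := by
  have hx : x ≠ 0 := by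
    rintro rfl
    rw [← hxy, zero_pow hk, hv.map_zero] at hy
    exact EReal.coe_ne_top r hy.symm
  obtain ⟨t, ht⟩ := hv.exists_eq_coe hx
  have h := hv.map_pow_of_eq_coe ht k
  rw [hxy, hy, EReal.coe_eq_coe_iff] at h
  rw [ht, EReal.coe_eq_coe_iff, h]
  field_simp

theorem map_eq_zero_of_pow_eq_one (hv : IsERealValuation v) {x : A} {k : ℕ} (hk : k ≠ 0)
    (hx : x ^ k = 1) : v x = 0 := by
  simpa using hv.map_eq_div_of_pow_eq hk hx (r := 0) (by simpa using hv.map_one)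

theorem map_neg (hv : IsERealValuation v) (x : A) : v (-x) = v x := by
  rw [← neg_one_mul, hv.map_mul, hv.map_eq_zero_of_pow_eq_one two_ne_zero (by norm_num), zero_add]

theorem map_prod_of_forall_eq_coe (hv : IsERealValuation v) {ι : Type*} (s : Finset ι)
    (f : ι → A) {r : ℝ} (hf : ∀ b ∈ s, v (f b) = r) :
    v (∏ b ∈ s, f b) = ((#s * r : ℝ) : EReal) := by
  classical
  induction s using Finset.induction_on with
  | empty => simpa using hv.map_one
  | insert b s hb ih =>
    rw [prod_insert hb, hv.map_mul, hf b (mem_insert_self b s),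
      ih fun c hc => hf c (mem_insert_of_mem hc), ← EReal.coe_add, card_insert_of_notMem hb]
    congr 1
    push_cast
    ring

theorem nonneg_map_sum (hv : IsERealValuation v) {ι : Type*} (s : Finset ι) (f : ι → A)
    (hf : ∀ b ∈ s, 0 ≤ v (f b)) : 0 ≤ v (∑ b ∈ s, f b) :=
  sum_induction f (fun x => 0 ≤ v x)
    (fun x y hx hy => (le_min hx hy).trans (hv.min_le_map_add x y)) (by simp [hv.map_zero]) hf

theorem map_one_sub_le_map_one_sub_pow (hv : IsERealValuation v) {η : A} (hη : v η = 0)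
    (c : ℕ) : v (1 - η) ≤ v (1 - η ^ c) := by
  have hgeom : 1 - η ^ c = (∑ t ∈ range c, η ^ t) * (1 - η) := by
    rw [← neg_sub, ← geom_sum_mul, neg_mul_eq_mul_neg, neg_sub]
  have hsum : 0 ≤ v (∑ t ∈ range c, η ^ t) := hv.nonneg_map_sum _ _ fun t _ => by
    simpa using (hv.map_pow_of_eq_coe (r := 0) (by simpa using hη) t).ge
  rw [hgeom, hv.map_mul]
  exact le_add_of_nonneg_left hsum

theorem map_one_sub_eq_of_isPrimitiveRoot (hv : IsERealValuation v) {ξ μ : A} {k : ℕ} [NeZero k]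
    (hξ : IsPrimitiveRoot ξ k) (hμ : IsPrimitiveRoot μ k) : v (1 - ξ) = v (1 - μ) := by
  obtain ⟨c, -, -, rfl⟩ := hξ.isPrimitiveRoot_iff.1 hμ
  obtain ⟨d, -, -, hd⟩ := hμ.isPrimitiveRoot_iff.1 hξ
  have hvξ := hv.map_eq_zero_of_pow_eq_one (NeZero.ne k) hξ.pow_eq_one
  have hvμ := hv.map_eq_zero_of_pow_eq_one (NeZero.ne k) hμ.pow_eq_one
  refine le_antisymm (hv.map_one_sub_le_map_one_sub_pow hvξ c) ?_
  conv_rhs => rw [← hd]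
  exact hv.map_one_sub_le_map_one_sub_pow hvμ d

theorem map_one_sub_of_isPrimitiveRoot_prime_pow (hv : IsERealValuation v) {p : ℕ}
    [hp : Fact p.Prime] (hvp : v (p : A) = 1) {ξ : A} {m : ℕ}
    (hξ : IsPrimitiveRoot ξ (p ^ (m + 1))) :
    v (1 - ξ) = ((1 / (p ^ m * (p - 1)) : ℝ) : EReal) := by
  have hprod : ∏ μ ∈ primitiveRoots (p ^ (m + 1)) A, (1 - μ) = p := by
    simpa [eval_prod] using congrArg (eval 1) (cyclotomic_eq_prod_X_sub_primitiveRoots hξ).symm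
  have hξ1 : 1 - ξ ≠ 0 :=
    sub_ne_zero.2 (hξ.ne_one (Nat.one_lt_pow m.succ_ne_zero hp.out.one_lt)).symm
  obtain ⟨r, hr⟩ := hv.exists_eq_coe hξ1
  have h := hv.map_prod_of_forall_eq_coe _ (fun μ => 1 - μ) fun μ hμ =>
    (hv.map_one_sub_eq_of_isPrimitiveRoot
      ((mem_primitiveRoots (pow_pos hp.out.pos _)).1 hμ) hξ).trans hr
  rw [hprod, hvp, hξ.card_primitiveRoots, Nat.totient_prime_pow_succ Fact.out, ← EReal.coe_one,
    EReal.coe_eq_coe_iff] at h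
  have hp1 : (0 : ℝ) < p - 1 := sub_pos.2 (by exact_mod_cast hp.out.one_lt)
  have hp0 : (0 : ℝ) < p := by exact_mod_cast hp.out.pos
  push_cast [hp.out.one_le] at h
  rw [hr, EReal.coe_eq_coe_iff, eq_div_iff (by positivity)]
  linarith

theorem map_pow_sub_one_of_isPrimitiveRoot (hv : IsERealValuation v) {p : ℕ}
    [hp : Fact p.Prime] (hvp : v (p : A) = 1) {ζ : A} {n l : ℕ}
    (hζ : IsPrimitiveRoot ζ (p ^ n)) (hl : l ≠ 0) (hln : l < p ^ n) :
    v (ζ ^ l - 1) = ((p ^ (l.factorization p + 1) / (p ^ n * (p - 1)) : ℝ) : EReal) := by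
  have hs := Nat.factorization_lt_of_lt_pow hp.out.one_lt hl hln
  obtain ⟨k, hk⟩ := Nat.exists_eq_add_of_lt hs
  have hprim := hζ.pow_prime_pow_factorization hp.out hl hs.le
  rw [show n - l.factorization p = k + 1 by omega] at hprim
  rw [← neg_sub, hv.map_neg, hv.map_one_sub_of_isPrimitiveRoot_prime_pow hvp hprim, hk,
    EReal.coe_eq_coe_iff]
  have hp0 : (p : ℝ) ≠ 0 := by exact_mod_cast hp.out.ne_zero
  have hp1 : (p : ℝ) - 1 ≠ 0 := sub_ne_zero.2 (by exact_mod_cast hp.out.ne_one)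
  field_simp
  ring

end IsERealValuation

theorem eq_of_sub_one_mul_add_pow_factorization_eq {p n i j : ℕ} (hp : p.Prime) (hi : i ≠ 0)
    (hin : i < p ^ n) (hj : j ≠ 0) (hjn : j < p ^ n) {mi mj e : ℤ}
    (h : (p - 1) * (mi * p ^ n + i) + e * p ^ (i.factorization p + 1) =
      (p - 1) * (mj * p ^ n + j) + e * p ^ (j.factorization p + 1)) : i = j := by
  wlog hle : i.factorization p ≤ j.factorization p generalizing i j mi mj
  · exact (this hj hjn hi hin h.symm (le_of_not_ge hle)).symm
  rcases hle.lt_or_eq with hlt | heq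
  · exfalso
    have hsn : i.factorization p + 1 ≤ n :=
      hlt.trans (Nat.factorization_lt_of_lt_pow hp.one_lt hj hjn)
    have hpn : (p : ℤ) ^ (i.factorization p + 1) ∣ p ^ n := pow_dvd_pow _ hsn
    have hpj : (p : ℤ) ^ (i.factorization p + 1) ∣ p ^ (j.factorization p + 1) :=
      pow_dvd_pow _ (by omega)
    have hj_dvd : (p : ℤ) ^ (i.factorization p + 1) ∣ j :=
      (pow_dvd_pow _ hlt).trans (Int.natCast_dvd_natCast.2 (Nat.ordProj_dvd j p))
    have hdvd : (p : ℤ) ^ (i.factorization p + 1) ∣ (p - 1) * i := by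
      rw [show ((p : ℤ) - 1) * i = (p - 1) * (mj * p ^ n + j) + e * p ^ (j.factorization p + 1)
        - (p - 1) * (mi * p ^ n) - e * p ^ (i.factorization p + 1) by linear_combination h]
      apply_rules [dvd_sub, dvd_add, Dvd.dvd.mul_left, dvd_refl]
    have hcop : IsCoprime ((p : ℤ) ^ (i.factorization p + 1)) (p - 1) :=
      IsCoprime.pow_left ⟨1, -1, by ring⟩
    exact Nat.pow_succ_factorization_not_dvd hi hp (by exact_mod_cast hcop.dvd_of_dvd_mul_left hdvd)
  · have hp1 : (p : ℤ) - 1 ≠ 0 := sub_ne_zero.2 (by exact_mod_cast hp.ne_one)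
    have hdvd : (p : ℤ) ^ n ∣ i - j := ⟨mj - mi, by
      rw [heq] at h
      linear_combination (mul_left_cancel₀ hp1 (by linear_combination h) :
        (mi * p ^ n + i : ℤ) = mj * p ^ n + j)⟩
    have habs : |(i : ℤ) - j| < p ^ n := by
      have hin' : (i : ℤ) < p ^ n := by exact_mod_cast hin
      have hjn' : (j : ℤ) < p ^ n := by exact_mod_cast hjn
      rw [abs_lt]
      constructor <;> linarith [Int.natCast_nonneg i, Int.natCast_nonneg j]
    exact_mod_cast sub_eq_zero.1 (Int.eq_zero_of_abs_lt_dvd hdvd habs)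

theorem stmt2_general (p : ℕ) [Fact p.Prime] (K : Type) [Field K]
    (e : ℕ) (he : 0 < e)
    (v : AlgebraicClosure K → EReal)
    (hv0 : v 0 = ⊤)
    (hvfin : ∀ x : AlgebraicClosure K, x ≠ 0 → v x ≠ ⊤)
    (hvbot : ∀ x : AlgebraicClosure K, v x ≠ ⊥)
    (hvmul : ∀ x y : AlgebraicClosure K, v (x * y) = v x + v y)
    (hvadd : ∀ x y : AlgebraicClosure K, min (v x) (v y) ≤ v (x + y))
    (hvp : v ((p : ℕ) : AlgebraicClosure K) = 1)
    (π : K)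
    (hπ : v (algebraMap K (AlgebraicClosure K) π) = (((e : ℝ)⁻¹ : ℝ) : EReal))
    (hdisc : ∀ y : K, y ≠ 0 →
      ∃ m : ℤ, v (algebraMap K (AlgebraicClosure K) y) = (((m : ℝ) / e : ℝ) : EReal))
    (n : ℕ)
    (πn : AlgebraicClosure K) (hπn : πn ^ p ^ n = algebraMap K (AlgebraicClosure K) π)
    (ζ : AlgebraicClosure K) (hζ : IsPrimitiveRoot ζ (p ^ n))
    (a : ℕ → K) (ha : ∀ i ∈ Finset.Icc 1 (p ^ n - 1), a i ≠ 0)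
    (i j : ℕ) (hi : i ∈ Finset.Icc 1 (p ^ n - 1)) (hj : j ∈ Finset.Icc 1 (p ^ n - 1))
    (hij : v (algebraMap K (AlgebraicClosure K) (a i) * πn ^ i * (ζ ^ i - 1)) =
           v (algebraMap K (AlgebraicClosure K) (a j) * πn ^ j * (ζ ^ j - 1))) :
    i = j := by
  have hp : p.Prime := Fact.out
  have hv : IsERealValuation v := ⟨hv0, hvfin, hvbot, hvmul, hvadd⟩
  have hvπn := hv.map_eq_div_of_pow_eq (pow_ne_zero n hp.ne_zero) hπn hπ
  have hp0 : (p : ℝ) ≠ 0 := by exact_mod_cast hp.ne_zero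
  have hp1 : (p : ℝ) - 1 ≠ 0 := sub_ne_zero.2 (by exact_mod_cast hp.ne_one)
  have he0 : (e : ℝ) ≠ 0 := by exact_mod_cast he.ne'
  have hden : (e * p ^ n * (p - 1) : ℝ) ≠ 0 := by positivity
  have hterm : ∀ l ∈ Finset.Icc 1 (p ^ n - 1), ∃ m : ℤ,
      v (algebraMap K (AlgebraicClosure K) (a l) * πn ^ l * (ζ ^ l - 1)) =
        ((((p - 1) * (m * p ^ n + l) + e * p ^ (l.factorization p + 1) : ℤ) /
          (e * p ^ n * (p - 1)) : ℝ) : EReal) := by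
    intro l hl
    obtain ⟨hl1, hl2⟩ := Finset.mem_Icc.1 hl
    obtain ⟨m, hm⟩ := hdisc _ (ha l hl)
    refine ⟨m, ?_⟩
    rw [hvmul, hvmul, hm, hv.map_pow_of_eq_coe hvπn,
      hv.map_pow_sub_one_of_isPrimitiveRoot hvp hζ (by omega) (by omega), ← EReal.coe_add,
      ← EReal.coe_add, EReal.coe_eq_coe_iff, eq_div_iff hden]
    field_simp
    push_cast
    ring
  obtain ⟨mi, hmi⟩ := hterm i hi
  obtain ⟨mj, hmj⟩ := hterm j hj
  rw [hmi, hmj, EReal.coe_eq_coe_iff, div_left_inj' hden, Int.cast_inj] at hij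
  rw [Finset.mem_Icc] at hi hj
  exact eq_of_sub_one_mul_add_pow_factorization_eq hp (by omega) (by omega) (by omega) (by omega)
    hij

/-- `K` is a finite totally ramified extension of `Frac W(k)` with ramification index `e`,
encoded via a valuation `v` on an algebraic closure of `K` with `v p = 1`, `v π = 1/e` for a
uniformizer `π` of `K`, and `v(K^×) = (1/e)ℤ`.  Let `π_n` be a `p^n`-th root of `π`,
`ζ` a primitive `p^n`-th root of unity, and `a_1, …, a_{p^n-1}` nonzero elements of `K`.
Then for `i, j ∈ {1, …, p^n - 1}`, the equality
`v (a_i π_n^i (ζ^i - 1)) = v (a_j π_n^j (ζ^j - 1))` implies `i = j`. -/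
theorem stmt2 (p : ℕ) [Fact p.Prime] (K : Type) [Field K] [CharZero K]
    (e : ℕ) (he : 0 < e)
    (v : AlgebraicClosure K → EReal)
    (hv0 : v 0 = ⊤)
    (hvfin : ∀ x : AlgebraicClosure K, x ≠ 0 → v x ≠ ⊤)
    (hvbot : ∀ x : AlgebraicClosure K, v x ≠ ⊥)
    (hvmul : ∀ x y : AlgebraicClosure K, v (x * y) = v x + v y)
    (hvadd : ∀ x y : AlgebraicClosure K, min (v x) (v y) ≤ v (x + y))
    (hvp : v ((p : ℕ) : AlgebraicClosure K) = 1)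
    (π : K)
    (hπ : v (algebraMap K (AlgebraicClosure K) π) = (((e : ℝ)⁻¹ : ℝ) : EReal))
    (hdisc : ∀ y : K, y ≠ 0 →
      ∃ m : ℤ, v (algebraMap K (AlgebraicClosure K) y) = (((m : ℝ) / e : ℝ) : EReal))
    (n : ℕ) (hn : 1 ≤ n)
    (πn : AlgebraicClosure K) (hπn : πn ^ p ^ n = algebraMap K (AlgebraicClosure K) π)
    (ζ : AlgebraicClosure K) (hζ : IsPrimitiveRoot ζ (p ^ n))
    (a : ℕ → K) (ha : ∀ i ∈ Finset.Icc 1 (p ^ n - 1), a i ≠ 0)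
    (i j : ℕ) (hi : i ∈ Finset.Icc 1 (p ^ n - 1)) (hj : j ∈ Finset.Icc 1 (p ^ n - 1))
    (hij : v (algebraMap K (AlgebraicClosure K) (a i) * πn ^ i * (ζ ^ i - 1)) =
           v (algebraMap K (AlgebraicClosure K) (a j) * πn ^ j * (ζ ^ j - 1))) :
    i = j :=
  stmt2_general p K e he v hv0 hvfin hvbot hvmul hvadd hvp π hπ hdisc n πn hπn ζ hζ a ha i j hi hj
    hij
end

section
/- Let K be a finite totally ramified extension of F = Frac W(k), π a uniformizer of K, and π_n a p^n-th root of π. Write x = Σ_{i=0}^{p^n - 1} a_i π_n^i with a_i ∈ K, and let σ be an element of Gal(K̄/K) with σ(π_n) = ζ π_n for ζ a primitive p^n-th root of unity. Then v(σx - x) = min_{1 ≤ i ≤ p^n - 1} ( v(a_i) + i/(e p^n) + p^{v_p(i)} / (p^{n-1}(p-1)) ). -/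
/-!
Write `σ x - x = ∑ aᵢ πₙ^i (ζ^i - 1)`. For `0 < i < p^n`, `ζ^i` is a primitive
`p^(n - v_p(i))`-th root of unity, and for a primitive `p^(m+1)`-th root `ω` one has
`v(1 - ω) = 1/(p^m (p - 1))`: the `φ(p^(m+1))` factors of `∏ (1 - μ) = Φ_{p^(m+1)}(1) = p` all have
the same valuation, since each `1 - μ` is a multiple of each other one by a sum of roots of unity.
So the `i`-th term has valuation `v(aᵢ) + i/(e p^n) + p^{v_p(i)}/(p^(n-1)(p-1))`. Multiplying by
`e p^n (p - 1)` and reducing modulo `p^(v_p(i)+1)` shows that these values are pairwise distinct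
(`v(aᵢ) ∈ (1/e)ℤ`), so the valuation of the sum is the minimum of the valuations of its terms.
-/

open Finset

theorem WithTop.nsmul_eq_coe_iff {N : ℕ} (hN : N ≠ 0) {c : WithTop ℝ} {s : ℝ} :
    N • c = s ↔ c = ((s / N : ℝ) : WithTop ℝ) := by
  induction c with
  | top =>
    obtain ⟨k, rfl⟩ := Nat.exists_eq_succ_of_ne_zero hN
    simp [succ_nsmul]
  | coe r =>
    rw [← WithTop.coe_nsmul, WithTop.coe_eq_coe, WithTop.coe_eq_coe, nsmul_eq_mul,
      eq_div_iff (Nat.cast_ne_zero.mpr hN), mul_comm]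

-- `WithBot.coe_unbot` at type `EReal`, so that `rw` finds it in goals about `EReal`.
theorem EReal.coe_unbot (x : EReal) (hx : x ≠ ⊥) :
    (WithBot.some (WithBot.unbot x hx) : EReal) = x :=
  WithBot.coe_unbot x hx

theorem EReal.coe_finset_inf {ι : Type*} (s : Finset ι) (f : ι → WithTop ℝ) :
    (WithBot.some (s.inf f) : EReal) = s.inf fun i => (WithBot.some (f i) : EReal) :=
  apply_inf_eq_inf_comp_of_linearOrder (β := EReal) _ WithBot.coe_mono rfl

theorem IsPrimitiveRoot.pow_prime_pow_sub_padicValNat {M : Type*} [CommMonoid M] {ζ : M}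
    {p n i : ℕ} [hp : Fact p.Prime] (hζ : IsPrimitiveRoot ζ (p ^ n)) (hi0 : i ≠ 0)
    (hi : padicValNat p i ≤ n) : IsPrimitiveRoot (ζ ^ i) (p ^ (n - padicValNat p i)) := by
  have hsplit := Nat.ordProj_mul_ordCompl_eq_self i p
  rw [Nat.factorization_def i hp.out] at hsplit
  have hcop := Nat.coprime_ordCompl hp.out hi0
  rw [Nat.factorization_def i hp.out] at hcop
  have hpow : ζ ^ i = (ζ ^ p ^ padicValNat p i) ^ (i / p ^ padicValNat p i) := by
    rw [← pow_mul, hsplit]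
  rw [hpow]
  exact (hζ.pow (pow_pos hp.out.pos n) (by rw [← pow_add, Nat.add_sub_cancel' hi])).pow_of_coprime
    _ (hcop.pow_left _).symm

theorem isCoprime_pow_self_sub_one {R : Type*} [CommRing R] (p : R) (k : ℕ) :
    IsCoprime (p ^ k) (p - 1) :=
  IsCoprime.pow_left ⟨1, -1, by ring⟩

theorem Nat.eq_of_pow_dvd_sub_mul_add {p n i j : ℕ} [hp : Fact p.Prime] (hi0 : 0 < i)
    (hi : i < p ^ n) (hj0 : 0 < j) (hj : j < p ^ n) (c : ℤ)
    (h : (p : ℤ) ^ n ∣ ((i : ℤ) - j) * (p - 1) +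
      c * ((p : ℤ) ^ (padicValNat p i + 1) - (p : ℤ) ^ (padicValNat p j + 1))) : i = j := by
  wlog hle : padicValNat p i ≤ padicValNat p j generalizing i j
  · refine (this hj0 hj hi0 hi ?_ (le_of_not_ge hle)).symm
    rw [← dvd_neg]
    ring_nf at h ⊢
    exact h
  have hk : padicValNat p i < n :=
    (padicValNat_le_nat_log i).trans_lt (Nat.log_lt_of_lt_pow hi0.ne' hi)
  have hdvd_sub : (p : ℤ) ^ (padicValNat p i + 1) ∣ (i : ℤ) - j := by
    refine (isCoprime_pow_self_sub_one _ _).dvd_of_dvd_mul_right ?_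
    have hc : (p : ℤ) ^ (padicValNat p i + 1) ∣
        c * ((p : ℤ) ^ (padicValNat p i + 1) - (p : ℤ) ^ (padicValNat p j + 1)) :=
      ((dvd_refl _).sub (pow_dvd_pow _ (Nat.succ_le_succ hle))).mul_left c
    exact (dvd_add_left hc).mp ((pow_dvd_pow _ hk).trans h)
  have hval : padicValNat p i = padicValNat p j := by
    refine le_antisymm hle (not_lt.mp fun hlt => pow_succ_padicValNat_not_dvd (p := p) hi0.ne' ?_)
    have hdvd_j : (p : ℤ) ^ (padicValNat p i + 1) ∣ j := by
      exact_mod_cast (pow_dvd_pow p hlt).trans pow_padicValNat_dvd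
    have hdvd_i : (p : ℤ) ^ (padicValNat p i + 1) ∣ i := by simpa using hdvd_sub.add hdvd_j
    exact_mod_cast hdvd_i
  rw [hval, sub_self, mul_zero, add_zero] at h
  have hn := (isCoprime_pow_self_sub_one _ n).dvd_of_dvd_mul_right h
  have hi' : (i : ℤ) < (p : ℤ) ^ n := by exact_mod_cast hi
  have hj' : (j : ℤ) < (p : ℤ) ^ n := by exact_mod_cast hj
  have := Int.eq_zero_of_abs_lt_dvd hn (abs_sub_lt_iff.mpr ⟨by omega, by omega⟩)
  omega

theorem eq_of_div_add_pow_padicValNat_div_eq {p e n i j : ℕ} [hp : Fact p.Prime] (he : 0 < e)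
    (hi0 : 0 < i) (hi : i < p ^ n) (hj0 : 0 < j) (hj : j < p ^ n) (mi mj : ℤ)
    (h : (mi : ℝ) / e + i / (e * p ^ n) +
        (p : ℝ) ^ padicValNat p i / ((p : ℝ) ^ (n - 1) * (p - 1)) =
      (mj : ℝ) / e + j / (e * p ^ n) +
        (p : ℝ) ^ padicValNat p j / ((p : ℝ) ^ (n - 1) * (p - 1))) :
    i = j := by
  refine Nat.eq_of_pow_dvd_sub_mul_add hi0 hi hj0 hj e ⟨(mj - mi) * (p - 1), ?_⟩
  obtain ⟨n, rfl⟩ := Nat.exists_eq_add_one_of_ne_zero (n := n) (by rintro rfl; simp at hi; omega)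
  have hp1 : (1 : ℝ) < p := by exact_mod_cast hp.out.one_lt
  have : (p : ℝ) - 1 ≠ 0 := by linarith
  have : (e : ℝ) ≠ 0 := by positivity
  have hreal : ((i : ℝ) - j) * (p - 1) +
      e * ((p : ℝ) ^ (padicValNat p i + 1) - (p : ℝ) ^ (padicValNat p j + 1)) =
      (p : ℝ) ^ (n + 1) * ((mj - mi) * (p - 1)) := by
    simp only [Nat.add_sub_cancel] at h
    field_simp at h
    refine mul_left_cancel₀ (pow_ne_zero n (by positivity : (p : ℝ) ≠ 0)) ?_
    linear_combination h
  exact_mod_cast hreal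

namespace AddValuation

section CommRing

variable {R : Type*} [CommRing R]

theorem map_sum_eq_inf_of_injOn {Γ₀ : Type*} [LinearOrderedAddCommMonoidWithTop Γ₀]
    (v : AddValuation R Γ₀) {ι : Type*} (s : Finset ι) (f : ι → R)
    (hf : Set.InjOn (fun i => v (f i)) s) : v (∑ i ∈ s, f i) = s.inf fun i => v (f i) := by
  induction s using Finset.cons_induction with
  | empty => simp
  | cons a s ha ih =>
    rw [coe_cons] at hf
    rw [sum_cons, inf_cons, ← ih (hf.mono (Set.subset_insert _ _))]
    rcases s.eq_empty_or_nonempty with rfl | hs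
    · simp
    obtain ⟨i, hi, hmin⟩ := s.exists_mem_eq_inf hs fun i => v (f i)
    refine v.map_add_of_distinct_val fun h => ha ?_
    rw [ih (hf.mono (Set.subset_insert _ _)), hmin] at h
    exact (hf (Set.mem_insert _ _) (Set.mem_insert_of_mem _ hi) h) ▸ hi

theorem map_prod {Γ₀ : Type*} [LinearOrderedAddCommMonoidWithTop Γ₀] (v : AddValuation R Γ₀)
    {ι : Type*} (s : Finset ι) (f : ι → R) : v (∏ i ∈ s, f i) = ∑ i ∈ s, v (f i) := by
  induction s using Finset.cons_induction with
  | empty => simp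
  | cons a s ha ih => rw [prod_cons, sum_cons, v.map_mul, ih]

variable (v : AddValuation R (WithTop ℝ))

theorem map_eq_coe_div_of_pow_eq {x : R} {N : ℕ} (hN : N ≠ 0) {r : ℝ} (h : v (x ^ N) = r) :
    v x = ((r / N : ℝ) : WithTop ℝ) :=
  (WithTop.nsmul_eq_coe_iff hN).mp (by rwa [← v.map_pow])

theorem map_eq_zero_of_pow_eq_one {x : R} {N : ℕ} (hN : N ≠ 0) (hx : x ^ N = 1) : v x = 0 := by
  rw [v.map_eq_coe_div_of_pow_eq hN (r := 0) (by rw [hx, v.map_one]; rfl), zero_div]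
  rfl

theorem map_one_sub_le_of_isPrimitiveRoot [IsDomain R] {ω x : R} {N : ℕ} [NeZero N]
    (hω : IsPrimitiveRoot ω N) (hx : x ^ N = 1) : v (1 - ω) ≤ v (1 - x) := by
  obtain ⟨t, -, rfl⟩ := hω.eq_pow_of_pow_eq_one hx
  have hgeom : 1 - ω ^ t = (∑ j ∈ range t, ω ^ j) * (1 - ω) := by
    rw [mul_comm, mul_neg_geom_sum]
  have hsum : 0 ≤ v (∑ j ∈ range t, ω ^ j) := v.map_le_sum fun j _ =>
    (v.map_eq_zero_of_pow_eq_one (NeZero.ne N) (by rw [pow_right_comm, hω.pow_eq_one, one_pow])).ge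
  rw [hgeom, v.map_mul]
  exact le_add_of_nonneg_left hsum

theorem map_one_sub_of_isPrimitiveRoot_prime_pow [IsDomain R] {p : ℕ} [hp : Fact p.Prime]
    (hvp : v p = 1) {m : ℕ} {ω : R} (hω : IsPrimitiveRoot ω (p ^ (m + 1))) :
    v (1 - ω) = (((p : ℝ) ^ m * ((p : ℝ) - 1))⁻¹ : ℝ) := by
  have hcard : (primitiveRoots (p ^ (m + 1)) R).card = p ^ m * (p - 1) := by
    rw [hω.card_primitiveRoots, Nat.totient_prime_pow_succ hp.out]
  have hprod : ∏ μ ∈ primitiveRoots (p ^ (m + 1)) R, (1 - μ) = p := by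
    have h := Polynomial.eval_one_cyclotomic_prime_pow (R := R) (p := p) m
    rw [Polynomial.cyclotomic_eq_prod_X_sub_primitiveRoots hω, Polynomial.eval_prod] at h
    simpa using h
  have hNeZero : NeZero (p ^ (m + 1)) := ⟨pow_ne_zero _ hp.out.ne_zero⟩
  have hconst : ∀ μ ∈ primitiveRoots (p ^ (m + 1)) R, v (1 - μ) = v (1 - ω) := fun μ hμ => by
    have hμ' := (mem_primitiveRoots (Nat.pos_of_ne_zero hNeZero.out)).mp hμ
    exact le_antisymm (v.map_one_sub_le_of_isPrimitiveRoot hμ' hω.pow_eq_one)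
      (v.map_one_sub_le_of_isPrimitiveRoot hω hμ'.pow_eq_one)
  have h : (p ^ m * (p - 1)) • v (1 - ω) = ((1 : ℝ) : WithTop ℝ) := by
    rw [← hcard, ← sum_const, ← sum_congr rfl hconst, ← v.map_prod, hprod, hvp]
    rfl
  have hp1 : 1 < p := hp.out.one_lt
  rw [(WithTop.nsmul_eq_coe_iff (by positivity [Nat.sub_pos_of_lt hp1])).mp h, Nat.cast_mul,
    Nat.cast_pow, Nat.cast_sub hp1.le, Nat.cast_one, one_div]

theorem map_pow_sub_one_of_isPrimitiveRoot [IsDomain R] {p : ℕ} [hp : Fact p.Prime]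
    (hvp : v p = 1) {n i : ℕ} {ζ : R} (hζ : IsPrimitiveRoot ζ (p ^ n)) (hi0 : 0 < i)
    (hi : i < p ^ n) :
    v (ζ ^ i - 1) = ((p : ℝ) ^ padicValNat p i / ((p : ℝ) ^ (n - 1) * ((p : ℝ) - 1)) : ℝ) := by
  have hk : padicValNat p i < n :=
    (padicValNat_le_nat_log i).trans_lt (Nat.log_lt_of_lt_pow hi0.ne' hi)
  have hprim := hζ.pow_prime_pow_sub_padicValNat hi0.ne' hk.le
  rw [show n - padicValNat p i = (n - padicValNat p i - 1) + 1 by omega] at hprim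
  rw [v.map_sub_swap, v.map_one_sub_of_isPrimitiveRoot_prime_pow hvp hprim, WithTop.coe_eq_coe,
    show n - 1 = (n - padicValNat p i - 1) + padicValNat p i by omega, pow_add]
  have : (p : ℝ) ^ padicValNat p i ≠ 0 := pow_ne_zero _ (Nat.cast_ne_zero.mpr hp.out.ne_zero)
  field_simp

theorem map_mul_pow_mul_pow_sub_one [IsDomain R] {p : ℕ} [hp : Fact p.Prime] (hvp : v p = 1)
    {e n i : ℕ} {ζ ϖ b : R} (hζ : IsPrimitiveRoot ζ (p ^ n)) (hϖ : v (ϖ ^ p ^ n) = ((e : ℝ)⁻¹ : ℝ))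
    (hi0 : 0 < i) (hi : i < p ^ n) :
    v (b * ϖ ^ i * (ζ ^ i - 1)) = v b + (((i : ℝ) / (e * p ^ n) : ℝ) : WithTop ℝ) +
      (((p : ℝ) ^ padicValNat p i / ((p : ℝ) ^ (n - 1) * ((p : ℝ) - 1)) : ℝ) : WithTop ℝ) := by
  rw [v.map_mul, v.map_mul, v.map_pow, v.map_eq_coe_div_of_pow_eq (pow_ne_zero n hp.out.ne_zero) hϖ,
    v.map_pow_sub_one_of_isPrimitiveRoot hvp hζ hi0 hi, ← WithTop.coe_nsmul, nsmul_eq_mul]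
  congr 3
  push_cast
  ring

theorem injOn_map_mul_pow_mul_pow_sub_one [IsDomain R] {p : ℕ} [Fact p.Prime] (hvp : v p = 1)
    {e n : ℕ} (he : 0 < e) {ζ ϖ : R} (hζ : IsPrimitiveRoot ζ (p ^ n))
    (hϖ : v (ϖ ^ p ^ n) = ((e : ℝ)⁻¹ : ℝ)) {s : Finset ℕ} {b : ℕ → R}
    (hs : ∀ i ∈ s, 0 < i ∧ i < p ^ n) (hb : ∀ i ∈ s, ∃ m : ℤ, v (b i) = ((m : ℝ) / e : ℝ)) :
    Set.InjOn (fun i => v (b i * ϖ ^ i * (ζ ^ i - 1))) s := by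
  intro i hi j hj hij
  obtain ⟨mi, hmi⟩ := hb i hi
  obtain ⟨mj, hmj⟩ := hb j hj
  simp only [v.map_mul_pow_mul_pow_sub_one hvp hζ hϖ (hs i hi).1 (hs i hi).2,
    v.map_mul_pow_mul_pow_sub_one hvp hζ hϖ (hs j hj).1 (hs j hj).2, hmi, hmj] at hij
  exact eq_of_div_add_pow_padicValNat_div_eq he (hs i hi).1 (hs i hi).2 (hs j hj).1 (hs j hj).2
    mi mj (by exact_mod_cast hij)

end CommRing

section OfEReal

variable {A : Type*} [Ring A] [Nontrivial A]

-- `EReal = WithBot (WithTop ℝ)` and `v` never takes the value `⊥`.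
noncomputable def ofEReal (v : A → EReal) (hv0 : v 0 = ⊤) (hvfin : ∀ x : A, x ≠ 0 → v x ≠ ⊤)
    (hvbot : ∀ x : A, v x ≠ ⊥) (hvmul : ∀ x y : A, v (x * y) = v x + v y)
    (hvadd : ∀ x y : A, min (v x) (v y) ≤ v (x + y)) : AddValuation A (WithTop ℝ) :=
  AddValuation.of (fun x => WithBot.unbot (v x) (hvbot x))
    (WithBot.coe_injective (by rw [EReal.coe_unbot, hv0]; rfl))
    (by
      have h1 : v 1 = 0 := by
        have h := hvmul 1 1
        rw [mul_one] at h
        lift v 1 to ℝ using ⟨hvfin 1 one_ne_zero, hvbot 1⟩ with r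
        rw [← EReal.coe_add, EReal.coe_eq_coe_iff] at h
        rw [show r = 0 by linarith, EReal.coe_zero]
      exact WithBot.coe_injective (by rw [EReal.coe_unbot, h1]; rfl))
    (fun x y => by
      rw [← WithBot.coe_le_coe, WithBot.coe_min, EReal.coe_unbot, EReal.coe_unbot,
        EReal.coe_unbot]
      exact hvadd x y)
    (fun x y => WithBot.coe_injective (by
      rw [WithBot.coe_add, EReal.coe_unbot, EReal.coe_unbot, EReal.coe_unbot]
      exact hvmul x y))

variable (v : A → EReal) (hv0 : v 0 = ⊤) (hvfin : ∀ x : A, x ≠ 0 → v x ≠ ⊤)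
  (hvbot : ∀ x : A, v x ≠ ⊥) (hvmul : ∀ x y : A, v (x * y) = v x + v y)
  (hvadd : ∀ x y : A, min (v x) (v y) ≤ v (x + y))

theorem coe_ofEReal (x : A) :
    (WithBot.some (ofEReal v hv0 hvfin hvbot hvmul hvadd x) : EReal) = v x :=
  EReal.coe_unbot _ _

theorem ofEReal_eq_coe_iff {x : A} {r : ℝ} :
    ofEReal v hv0 hvfin hvbot hvmul hvadd x = r ↔ v x = r := by
  rw [← coe_ofEReal v hv0 hvfin hvbot hvmul hvadd x]
  exact WithBot.coe_inj.symm

end OfEReal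

end AddValuation

theorem AlgEquiv.map_sum_sub_self_eq_sum_filter {K L : Type*} [CommRing K] [CommRing L]
    [Algebra K L] (σ : L ≃ₐ[K] L) {πn ζ : L} (hσ : σ πn = ζ * πn) (a : ℕ → K) (N : ℕ)
    [DecidablePred fun i => a i ≠ 0] :
    σ (∑ i ∈ range N, algebraMap K L (a i) * πn ^ i) -
        ∑ i ∈ range N, algebraMap K L (a i) * πn ^ i =
      ∑ i ∈ (Icc 1 (N - 1)).filter (fun i => a i ≠ 0),
        algebraMap K L (a i) * πn ^ i * (ζ ^ i - 1) := by
  have hterm (i : ℕ) : σ (algebraMap K L (a i) * πn ^ i) - algebraMap K L (a i) * πn ^ i =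
      algebraMap K L (a i) * πn ^ i * (ζ ^ i - 1) := by
    rw [map_mul, map_pow, hσ, AlgEquiv.commutes]
    ring
  rw [map_sum, ← sum_sub_distrib, sum_congr rfl fun i _ => hterm i]
  refine (sum_subset (fun i hi => ?_) fun i hi hiT => ?_).symm
  · simp only [mem_filter, mem_Icc, mem_range] at hi ⊢
    omega
  · simp only [mem_filter, mem_Icc, mem_range, not_and, not_not] at hi hiT
    rcases Nat.eq_zero_or_pos i with rfl | hi0
    · simp
    · simp [hiT ⟨hi0, by omega⟩]

open scoped Classical

theorem stmt3_general (p : ℕ) [Fact p.Prime] (K : Type) [Field K]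
    (e : ℕ) (he : 0 < e)
    (v : AlgebraicClosure K → EReal)
    (hv0 : v 0 = ⊤)
    (hvfin : ∀ x : AlgebraicClosure K, x ≠ 0 → v x ≠ ⊤)
    (hvbot : ∀ x : AlgebraicClosure K, v x ≠ ⊥)
    (hvmul : ∀ x y : AlgebraicClosure K, v (x * y) = v x + v y)
    (hvadd : ∀ x y : AlgebraicClosure K, min (v x) (v y) ≤ v (x + y))
    (hvp : v ((p : ℕ) : AlgebraicClosure K) = 1)
    (π : K)
    (hπ : v (algebraMap K (AlgebraicClosure K) π) = (((e : ℝ)⁻¹ : ℝ) : EReal))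
    (hdisc : ∀ y : K, y ≠ 0 →
      ∃ m : ℤ, v (algebraMap K (AlgebraicClosure K) y) = (((m : ℝ) / e : ℝ) : EReal))
    (n : ℕ)
    (πn : AlgebraicClosure K) (hπn : πn ^ p ^ n = algebraMap K (AlgebraicClosure K) π)
    (ζ : AlgebraicClosure K) (hζ : IsPrimitiveRoot ζ (p ^ n))
    (σ : AlgebraicClosure K ≃ₐ[K] AlgebraicClosure K) (hσ : σ πn = ζ * πn)
    (a : ℕ → K)
    (x : AlgebraicClosure K)
    (hx : x = ∑ i ∈ Finset.range (p ^ n),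
      algebraMap K (AlgebraicClosure K) (a i) * πn ^ i) :
    v (σ x - x) =
      (((Finset.Icc 1 (p ^ n - 1)).filter (fun i => a i ≠ 0)).inf
        (fun i => v (algebraMap K (AlgebraicClosure K) (a i)) +
          (((i : ℝ) / (e * p ^ n) : ℝ) : EReal) +
          ((((p : ℝ) ^ padicValNat p i) / ((p : ℝ) ^ (n - 1) * ((p : ℝ) - 1)) : ℝ) : EReal))) := by
  set w := AddValuation.ofEReal v hv0 hvfin hvbot hvmul hvadd
  have hv (y : AlgebraicClosure K) : v y = WithBot.some (w y) :=
    (AddValuation.coe_ofEReal ..).symm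
  have hwp : w p = ((1 : ℝ) : WithTop ℝ) := (AddValuation.ofEReal_eq_coe_iff ..).mpr hvp
  have hwπn : w (πn ^ p ^ n) = ((e : ℝ)⁻¹ : ℝ) := by
    rw [hπn]
    exact (AddValuation.ofEReal_eq_coe_iff ..).mpr hπ
  set T := (Icc 1 (p ^ n - 1)).filter (fun i => a i ≠ 0)
  have hT : ∀ i ∈ T, 0 < i ∧ i < p ^ n := fun i hi => by
    simp only [T, mem_filter, mem_Icc] at hi
    omega
  have hwa : ∀ i ∈ T, ∃ m : ℤ, w (algebraMap K (AlgebraicClosure K) (a i)) = ((m : ℝ) / e : ℝ) :=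
    fun i hi => (hdisc (a i) (mem_filter.mp hi).2).imp fun m hm =>
      (AddValuation.ofEReal_eq_coe_iff ..).mpr hm
  rw [hx, AlgEquiv.map_sum_sub_self_eq_sum_filter σ hσ, hv,
    w.map_sum_eq_inf_of_injOn _ _ (w.injOn_map_mul_pow_mul_pow_sub_one hwp he hζ hwπn hT hwa),
    EReal.coe_finset_inf]
  refine inf_congr (α := EReal) rfl fun i hi => ?_
  rw [w.map_mul_pow_mul_pow_sub_one hwp hζ hwπn (hT i hi).1 (hT i hi).2, hv]
  rfl

/-- Setting: `K` finite totally ramified over `Frac W(k)` with index `e`, encoded by a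
valuation `v` on an algebraic closure of `K` with `v p = 1`, `v π = 1/e`, `v(K^×) = (1/e)ℤ`.
Let `π_n^{p^n} = π`, `x = Σ_{i=0}^{p^n-1} a_i π_n^i` with `a_i ∈ K`, and `σ ∈ Gal(K̄/K)`
with `σ π_n = ζ π_n` for `ζ` a primitive `p^n`-th root of unity.  Then
`v (σ x - x) = min_{1 ≤ i ≤ p^n - 1, a_i ≠ 0} ( v a_i + i/(e p^n) + p^{v_p i}/(p^{n-1}(p-1)) )`
(the `min`, as a `Finset.inf` in `EReal`, being `⊤` when no such index exists). -/
theorem stmt3 (p : ℕ) [Fact p.Prime] (K : Type) [Field K] [CharZero K]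
    (e : ℕ) (he : 0 < e)
    (v : AlgebraicClosure K → EReal)
    (hv0 : v 0 = ⊤)
    (hvfin : ∀ x : AlgebraicClosure K, x ≠ 0 → v x ≠ ⊤)
    (hvbot : ∀ x : AlgebraicClosure K, v x ≠ ⊥)
    (hvmul : ∀ x y : AlgebraicClosure K, v (x * y) = v x + v y)
    (hvadd : ∀ x y : AlgebraicClosure K, min (v x) (v y) ≤ v (x + y))
    (hvp : v ((p : ℕ) : AlgebraicClosure K) = 1)
    (π : K)
    (hπ : v (algebraMap K (AlgebraicClosure K) π) = (((e : ℝ)⁻¹ : ℝ) : EReal))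
    (hdisc : ∀ y : K, y ≠ 0 →
      ∃ m : ℤ, v (algebraMap K (AlgebraicClosure K) y) = (((m : ℝ) / e : ℝ) : EReal))
    (n : ℕ) (hn : 1 ≤ n)
    (πn : AlgebraicClosure K) (hπn : πn ^ p ^ n = algebraMap K (AlgebraicClosure K) π)
    (ζ : AlgebraicClosure K) (hζ : IsPrimitiveRoot ζ (p ^ n))
    (σ : AlgebraicClosure K ≃ₐ[K] AlgebraicClosure K) (hσ : σ πn = ζ * πn)
    (a : ℕ → K)
    (x : AlgebraicClosure K)
    (hx : x = ∑ i ∈ Finset.range (p ^ n),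
      algebraMap K (AlgebraicClosure K) (a i) * πn ^ i) :
    v (σ x - x) =
      (((Finset.Icc 1 (p ^ n - 1)).filter (fun i => a i ≠ 0)).inf
        (fun i => v (algebraMap K (AlgebraicClosure K) (a i)) +
          (((i : ℝ) / (e * p ^ n) : ℝ) : EReal) +
          ((((p : ℝ) ^ padicValNat p i) / ((p : ℝ) ^ (n - 1) * ((p : ℝ) - 1)) : ℝ) : EReal))) :=
  stmt3_general p K e he v hv0 hvfin hvbot hvmul hvadd hvp π hπ hdisc n πn hπn ζ hζ σ hσ a x hx
end

section
/- Let x ∈ K_n = K(π_n) where π_n^{p^n} = π is a uniformizer of K. Suppose that for every m ∈ ℕ there exists y_m ∈ K_m with v(x - y_m) ≥ A - 1/(p^m(p-1)). Then for every σ ∈ Gal(K̄/K), v(σx - x) ≥ A. -/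
/-!
Write `x = ∑_{i < p^n} d_i π_n^i` and `σ π_n = ζ π_n` with `ζ ^ p^n = 1`, so that
`σ x - x = ∑ d_i π_n^i (ζ^i - 1)`. For `i = p^k u` with `p ∤ u` and `m = n - k - 1`, `ζ^i` is a
`p^(m+1)`-th root of unity, whence `v (ζ^i - 1) ≥ 1 / (p^m (p - 1))` by the binomial theorem.
On the other hand `y_m ∈ K_m = K(π_n ^ p^(k+1))` has no monomial `π_n^i`, and nonzero monomials
`c π_n^j` with `j < p^n` have pairwise distinct valuations, so
`v (d_i π_n^i) ≥ v (x - y_m) ≥ A - 1 / (p^m (p - 1))`. Adding up, every term has valuation `≥ A`.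
-/

open Finset Polynomial

namespace WithTop

theorem eq_coe_div_of_nsmul_eq_coe {n : ℕ} (hn : n ≠ 0) {a : WithTop ℝ} {r : ℝ}
    (h : n • a = r) : a = ((r / n : ℝ) : WithTop ℝ) := by
  induction a using WithTop.recTopCoe with
  | top =>
    obtain ⟨k, rfl⟩ := Nat.exists_eq_succ_of_ne_zero hn
    simp [succ_nsmul] at h
  | coe a =>
    rw [← WithTop.coe_nsmul, WithTop.coe_eq_coe, nsmul_eq_mul] at h
    rw [WithTop.coe_eq_coe, ← h]
    field_simp

theorem coe_div_le_of_min_le_nsmul {p : ℕ} (hp : 1 < p) {a t : WithTop ℝ} {b : ℝ}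
    (ht : 0 ≤ t) (hb : b ≤ p / (p - 1)) (hba : (b : WithTop ℝ) ≤ a) (h : min a (1 + t) ≤ p • t) :
    ((b / p : ℝ) : WithTop ℝ) ≤ t := by
  induction t using WithTop.recTopCoe with
  | top => exact le_top
  | coe t =>
    have hp' : (1 : ℝ) < p := by exact_mod_cast hp
    have h' : min b (1 + t) ≤ p * t := by
      have := (min_le_min_right _ hba).trans h
      rwa [← WithTop.coe_one, ← WithTop.coe_add, ← WithTop.coe_min, ← WithTop.coe_nsmul,
        WithTop.coe_le_coe, nsmul_eq_mul] at this
    have ht' : 0 ≤ t := by exact_mod_cast ht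
    rw [WithTop.coe_le_coe, div_le_iff₀ (by linarith)]
    rcases le_total b (1 + t) with hb1 | hb1
    · rw [min_eq_left hb1] at h'; linarith
    · rw [min_eq_right hb1] at h'
      rw [le_div_iff₀ (by linarith)] at hb
      nlinarith

end WithTop

namespace AddValuation

variable {R Γ₀ : Type*} [LinearOrderedAddCommMonoidWithTop Γ₀]

theorem map_natCast_nonneg [Ring R] (v : AddValuation R Γ₀) (n : ℕ) : 0 ≤ v (n : R) := by
  induction n with
  | zero => simp
  | succ n ih => exact Nat.cast_succ (R := R) n ▸ v.map_le_add ih v.map_one.ge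

theorem map_sum_le_of_injOn [Ring R] (v : AddValuation R Γ₀) {ι : Type*} {s : Finset ι}
    {f : ι → R} (hf : Set.InjOn (fun i => v (f i)) s) {i : ι} (hi : i ∈ s) :
    v (∑ j ∈ s, f j) ≤ v (f i) := by
  classical
  obtain ⟨j, hj, hmin⟩ := s.exists_min_image (fun i => v (f i)) ⟨i, hi⟩
  rcases eq_or_ne (v (f j)) ⊤ with htop | htop
  · exact le_top.trans_eq (top_le_iff.1 (htop ▸ hmin i hi)).symm
  have hlt : ∀ k ∈ s.erase j, v (f j) < v (f k) := fun k hk =>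
    (hmin k (mem_of_mem_erase hk)).lt_of_ne fun h =>
      ne_of_mem_erase hk (hf (mem_of_mem_erase hk) hj h.symm)
  rw [← add_sum_erase s f hj, v.map_add_eq_of_lt_left (v.map_lt_sum htop hlt)]
  exact hmin i hi

/-- From `η ^ p = (η - 1) ^ p + 1 + p (η - 1) r` with `r` a polynomial in `η - 1` over `ℤ`. -/
theorem min_le_nsmul_map_sub_one [CommRing R] (v : AddValuation R Γ₀) {p : ℕ} (hp : p.Prime)
    {η : R} (hη : 0 ≤ v (η - 1)) :
    min (v (η ^ p - 1)) (v p + v (η - 1)) ≤ p • v (η - 1) := by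
  set r := ∑ k ∈ Ioo 0 p, (η - 1) ^ (k - 1) * 1 ^ (p - k - 1) * ((p.choose k / p : ℕ) : R)
  have hr : 0 ≤ v r := v.map_le_sum fun k _ => by
    rw [v.map_mul, v.map_mul, one_pow, v.map_one, add_zero, v.map_pow]
    exact add_nonneg (nsmul_nonneg hη _) (v.map_natCast_nonneg _)
  have hexp : (η - 1) ^ p = (η ^ p - 1) - p * (η - 1) * r := by
    have := add_pow_prime_eq hp (η - 1) 1
    rw [sub_add_cancel, one_pow, mul_one] at this
    rw [this]; ring
  rw [← v.map_pow, hexp]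
  refine le_trans (min_le_min le_rfl ?_) (v.map_sub _ _)
  rw [v.map_mul, v.map_mul]
  exact le_add_of_nonneg_right hr

theorem map_sub_one_nonneg_of_pow_eq_one [CommRing R]
    (v : AddValuation R (WithTop ℝ)) {n : ℕ} (hn : n ≠ 0) {η : R} (hη : η ^ n = 1) :
    0 ≤ v (η - 1) := by
  have hvη : v η = 0 := by
    have h := congrArg v hη
    rw [v.map_pow, v.map_one, ← WithTop.coe_zero] at h
    simpa using WithTop.eq_coe_div_of_nsmul_eq_coe hn h
  simpa [hvη] using v.map_sub η 1

theorem le_map_sub_one_of_pow_eq_one [CommRing R] (v : AddValuation R (WithTop ℝ))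
    {p : ℕ} (hp : p.Prime) (hvp : v p = 1) {j : ℕ} {η : R} (hη : η ^ p ^ (j + 1) = 1) :
    ((1 / (p ^ j * (p - 1)) : ℝ) : WithTop ℝ) ≤ v (η - 1) := by
  have hp1 : (1 : ℝ) < p := by exact_mod_cast hp.one_lt
  have hstep {η : R} {k : ℕ} (hη : η ^ p ^ k = 1) :
      min (v (η ^ p - 1)) (1 + v (η - 1)) ≤ p • v (η - 1) :=
    hvp ▸ v.min_le_nsmul_map_sub_one hp
      (v.map_sub_one_nonneg_of_pow_eq_one (pow_ne_zero _ hp.ne_zero) hη)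
  have hnonneg {η : R} {k : ℕ} (hη : η ^ p ^ k = 1) : 0 ≤ v (η - 1) :=
    v.map_sub_one_nonneg_of_pow_eq_one (pow_ne_zero _ hp.ne_zero) hη
  induction j generalizing η with
  | zero =>
    have h := hstep hη
    have h0 := hnonneg hη
    rw [zero_add, pow_one] at hη
    rw [hη, sub_self, v.map_zero] at h
    convert WithTop.coe_div_le_of_min_le_nsmul hp.one_lt h0 le_rfl le_top h using 2
    field_simp
  | succ j ih =>
    have hηp : (η ^ p) ^ p ^ (j + 1) = 1 := by rw [← pow_mul, ← pow_succ']; exact hη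
    convert WithTop.coe_div_le_of_min_le_nsmul hp.one_lt (hnonneg hη) ?_ (ih hηp) (hstep hη)
      using 2
    · field_simp; ring
    · rw [div_le_div_iff₀ (by positivity) (by linarith)]
      have : 1 ≤ (p : ℝ) * p ^ j := one_le_mul_of_one_le_of_one_le hp1.le (one_le_pow₀ hp1.le)
      nlinarith

end AddValuation

theorem exists_eq_sum_range_of_mem_adjoin {K L : Type*} [Field K] [Field L] [Algebra K L]
    {a : L} {N : ℕ} (hN : N ≠ 0) {c : K} (ha : a ^ N = algebraMap K L c) {z : L}
    (hz : z ∈ IntermediateField.adjoin K {a}) :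
    ∃ d : ℕ → K, z = ∑ i ∈ range N, algebraMap K L (d i) * a ^ i := by
  have hroot : aeval a (X ^ N - C c) = 0 := by simp [ha]
  have hint : IsIntegral K a :=
    .of_pow (Nat.pos_of_ne_zero hN) (ha ▸ isIntegral_algebraMap)
  rw [← IntermediateField.mem_toSubalgebra,
    IntermediateField.adjoin_simple_toSubalgebra_of_isAlgebraic hint.isAlgebraic,
    Algebra.adjoin_singleton_eq_range_aeval, AlgHom.mem_range] at hz
  obtain ⟨g, rfl⟩ := hz
  have hdeg : (g %ₘ (X ^ N - C c)).natDegree < N := by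
    have hq1 : X ^ N - C c ≠ 1 := fun h => hN (by simpa using congrArg natDegree h)
    simpa using natDegree_modByMonic_lt g (monic_X_pow_sub_C c hN) hq1
  refine ⟨fun i => (g %ₘ (X ^ N - C c)).coeff i, ?_⟩
  rw [← aeval_modByMonic_eq_self_of_root hroot, aeval_eq_sum_range' hdeg]
  exact sum_congr rfl fun i _ => Algebra.smul_def _ _

namespace AddValuation

variable {K L : Type*} [Field K] [Field L] [Algebra K L] (v : AddValuation L (WithTop ℝ))

/-- The nonzero monomials `c ϖ ^ i`, `i < N`, have pairwise distinct valuations, lying in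
`i / (e N) + ℤ / e`. -/
theorem map_sum_le_map_monomial {e N : ℕ} (he : 0 < e)
    (hdisc : ∀ y : K, y ≠ 0 → ∃ m : ℤ, v (algebraMap K L y) = ((m / e : ℝ) : WithTop ℝ))
    {ϖ : L} (hϖ : v ϖ = ((1 / (e * N) : ℝ) : WithTop ℝ)) (c : ℕ → K) {i : ℕ} (hi : i < N) :
    v (∑ j ∈ range N, algebraMap K L (c j) * ϖ ^ j) ≤ v (algebraMap K L (c i) * ϖ ^ i) := by
  classical
  have hN : (0 : ℝ) < N := by exact_mod_cast (i.zero_le.trans_lt hi)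
  have he' : (0 : ℝ) < e := by exact_mod_cast he
  have hval : ∀ j, algebraMap K L (c j) * ϖ ^ j ≠ 0 →
      ∃ m : ℤ, v (algebraMap K L (c j) * ϖ ^ j) = (((m * N + j) / (e * N) : ℝ) : WithTop ℝ) := by
    intro j hj
    obtain ⟨m, hm⟩ := hdisc (c j) fun h => hj (by simp [h])
    refine ⟨m, ?_⟩
    rw [v.map_mul, v.map_pow, hm, hϖ, ← WithTop.coe_nsmul, ← WithTop.coe_add, nsmul_eq_mul]
    congr 1
    field_simp
  rcases eq_or_ne (algebraMap K L (c i) * ϖ ^ i) 0 with h0 | h0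
  · rw [h0, v.map_zero]; exact le_top
  rw [← sum_filter_ne_zero]
  refine v.map_sum_le_of_injOn ?_ (mem_filter.2 ⟨mem_range.2 hi, h0⟩)
  intro j hj k hk hjk
  simp only [coe_filter, mem_range, Set.mem_ofPred_eq] at hj hk
  obtain ⟨mj, hmj⟩ := hval j hj.2
  obtain ⟨mk, hmk⟩ := hval k hk.2
  simp only [hmj, hmk, WithTop.coe_eq_coe] at hjk
  have hz : mj * (N : ℤ) + j = mk * N + k := by
    rw [div_left_inj' (by positivity)] at hjk
    exact_mod_cast hjk
  have hmod := congrArg (· % (N : ℤ)) hz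
  simp only [Int.mul_add_emod_self_right] at hmod
  have hmod' : j % N = k % N := by exact_mod_cast hmod
  rwa [Nat.mod_eq_of_lt hj.1, Nat.mod_eq_of_lt hk.1] at hmod'

theorem map_sub_le_map_monomial_of_mem_adjoin_pow {e P M : ℕ} (he : 0 < e)
    (hdisc : ∀ y : K, y ≠ 0 → ∃ m : ℤ, v (algebraMap K L y) = ((m / e : ℝ) : WithTop ℝ))
    {a : L} {c : K} (ha : a ^ (P * M) = algebraMap K L c)
    (hva : v a = ((1 / (e * ↑(P * M)) : ℝ) : WithTop ℝ)) (d : ℕ → K) {y : L}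
    (hy : y ∈ IntermediateField.adjoin K {a ^ P}) {i : ℕ} (hi : i < P * M) (hPi : ¬ P ∣ i) :
    v (∑ j ∈ range (P * M), algebraMap K L (d j) * a ^ j - y) ≤
      v (algebraMap K L (d i) * a ^ i) := by
  have hP : 0 < P := Nat.pos_of_ne_zero fun h => by simp [h] at hi
  have hM : M ≠ 0 := (Nat.pos_of_mul_pos_left (i.zero_le.trans_lt hi)).ne'
  obtain ⟨b, rfl⟩ := exists_eq_sum_range_of_mem_adjoin hM
    (by rw [← pow_mul, ha] : (a ^ P) ^ M = algebraMap K L c) hy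
  set b' : ℕ → K := fun j => if P ∣ j then b (j / P) else 0
  have hy : ∑ l ∈ range M, algebraMap K L (b l) * (a ^ P) ^ l =
      ∑ j ∈ range (P * M), algebraMap K L (b' j) * a ^ j := by
    refine sum_of_injOn (P * ·) (fun l _ l' _ h => Nat.eq_of_mul_eq_mul_left hP h) ?_ ?_ ?_
    · intro l hl
      simp only [coe_range, Set.mem_Iio] at hl ⊢
      exact Nat.mul_lt_mul_of_pos_left hl hP
    · intro j hj hj'
      rw [mem_range] at hj
      suffices ¬ P ∣ j by simp [b', this]
      rintro ⟨l, rfl⟩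
      exact hj' ⟨l, by simpa using lt_of_mul_lt_mul_left' hj, rfl⟩
    · intro l _
      simp [b', pow_mul, Nat.mul_div_cancel_left l hP]
  rw [hy, ← sum_sub_distrib]
  simp_rw [← sub_mul, ← _root_.map_sub]
  simpa [b', hPi] using v.map_sum_le_map_monomial he hdisc hva (fun j => d j - b' j) hi

theorem le_map_monomial_mul_pow_sub_one {p e n : ℕ} (hp : p.Prime) (hvp : v p = 1) (he : 0 < e)
    (hdisc : ∀ y : K, y ≠ 0 → ∃ m : ℤ, v (algebraMap K L y) = ((m / e : ℝ) : WithTop ℝ))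
    {a : L} {c : K} (ha : a ^ p ^ n = algebraMap K L c)
    (hva : v a = ((1 / (e * p ^ n) : ℝ) : WithTop ℝ)) (d : ℕ → K) {A : ℝ}
    (happrox : ∀ m < n, ∃ y ∈ IntermediateField.adjoin K {a ^ p ^ (n - m)},
      ((A - 1 / (p ^ m * (p - 1)) : ℝ) : WithTop ℝ) ≤
        v (∑ j ∈ range (p ^ n), algebraMap K L (d j) * a ^ j - y))
    {ζ : L} (hζ : ζ ^ p ^ n = 1) {i : ℕ} (hi : i < p ^ n) :
    (A : WithTop ℝ) ≤ v (algebraMap K L (d i) * a ^ i * (ζ ^ i - 1)) := by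
  rcases eq_or_ne (ζ ^ i) 1 with hζi | hζi
  · simp [hζi]
  have hi0 : i ≠ 0 := by rintro rfl; exact hζi (pow_zero ζ)
  obtain ⟨k, u, hpu, rfl⟩ := Nat.exists_eq_pow_mul_and_not_dvd hi0 p hp.ne_one
  have hkn : k < n := (Nat.pow_lt_pow_iff_right hp.one_lt).1
    ((Nat.le_mul_of_pos_right _ (Nat.pos_of_ne_zero (right_ne_zero_of_mul hi0))).trans_lt hi)
  obtain ⟨m, rfl⟩ : ∃ m, n = m + (k + 1) := ⟨n - (k + 1), by omega⟩
  obtain ⟨y, hy, hxy⟩ := happrox m (by omega)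
  rw [show m + (k + 1) - m = k + 1 by omega] at hy
  have hpow : p ^ (m + (k + 1)) = p ^ (k + 1) * p ^ m := by rw [← pow_add, add_comm]
  have hcoef : v (∑ j ∈ range (p ^ (m + (k + 1))), algebraMap K L (d j) * a ^ j - y) ≤
      v (algebraMap K L (d (p ^ k * u)) * a ^ (p ^ k * u)) := by
    rw [hpow] at ha hi ⊢
    refine v.map_sub_le_map_monomial_of_mem_adjoin_pow he hdisc ha ?_ d hy hi ?_
    · rw [hva, ← hpow]; push_cast; rfl
    · rwa [pow_succ, Nat.mul_dvd_mul_iff_left (pow_pos hp.pos k)]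
  have hroot : ((1 / (p ^ m * (p - 1)) : ℝ) : WithTop ℝ) ≤ v (ζ ^ (p ^ k * u) - 1) := by
    refine v.le_map_sub_one_of_pow_eq_one hp hvp ?_
    rw [← pow_mul, show p ^ k * u * p ^ (m + 1) = p ^ (m + (k + 1)) * u by ring, pow_mul, hζ,
      one_pow]
  calc (A : WithTop ℝ) = ((A - 1 / (p ^ m * (p - 1)) : ℝ) : WithTop ℝ) +
        ((1 / (p ^ m * (p - 1)) : ℝ) : WithTop ℝ) := by rw [← WithTop.coe_add, sub_add_cancel]
    _ ≤ _ := add_le_add (hxy.trans hcoef) hroot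
    _ = _ := (v.map_mul _ _).symm

theorem le_map_algEquiv_apply_sub {p e n : ℕ} (hp : p.Prime) (hvp : v p = 1) (he : 0 < e)
    (hdisc : ∀ y : K, y ≠ 0 → ∃ m : ℤ, v (algebraMap K L y) = ((m / e : ℝ) : WithTop ℝ))
    {a : L} {c : K} (ha : a ^ p ^ n = algebraMap K L c)
    (hva : v a = ((1 / (e * p ^ n) : ℝ) : WithTop ℝ)) {x : L}
    (hx : x ∈ IntermediateField.adjoin K {a}) {A : ℝ}
    (happrox : ∀ m < n, ∃ y ∈ IntermediateField.adjoin K {a ^ p ^ (n - m)},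
      ((A - 1 / (p ^ m * (p - 1)) : ℝ) : WithTop ℝ) ≤ v (x - y))
    (σ : L ≃ₐ[K] L) : (A : WithTop ℝ) ≤ v (σ x - x) := by
  have ha0 : a ≠ 0 := by rintro rfl; exact WithTop.top_ne_coe (v.map_zero ▸ hva)
  obtain ⟨d, rfl⟩ := exists_eq_sum_range_of_mem_adjoin (pow_ne_zero n hp.ne_zero) ha hx
  set ζ := σ a / a
  have hσa : σ a = ζ * a := (div_mul_cancel₀ _ ha0).symm
  have hζ : ζ ^ p ^ n = 1 := by
    rw [div_pow, ← _root_.map_pow, ha, AlgEquiv.commutes, div_self (ha ▸ pow_ne_zero _ ha0)]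
  have hσx : σ (∑ i ∈ range (p ^ n), algebraMap K L (d i) * a ^ i) -
      ∑ i ∈ range (p ^ n), algebraMap K L (d i) * a ^ i =
      ∑ i ∈ range (p ^ n), algebraMap K L (d i) * a ^ i * (ζ ^ i - 1) := by
    simp only [map_sum, _root_.map_mul, _root_.map_pow, AlgEquiv.commutes, hσa, ← sum_sub_distrib]
    exact sum_congr rfl fun i _ => by ring
  rw [hσx]
  exact v.map_le_sum fun i hi =>
    v.le_map_monomial_mul_pow_sub_one hp hvp he hdisc ha hva d happrox hζ (mem_range.1 hi)

end AddValuation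

/-- `EReal` is by definition `WithBot (WithTop ℝ)`. -/
theorem exists_addValuation_eq_coe {L : Type*} [Ring L] (v : L → EReal) (h0 : v 0 = ⊤)
    (h1 : v 1 = 0) (hbot : ∀ x, v x ≠ ⊥) (hmul : ∀ x y, v (x * y) = v x + v y)
    (hadd : ∀ x y, min (v x) (v y) ≤ v (x + y)) :
    ∃ w : AddValuation L (WithTop ℝ), ∀ x, v x = (w x : WithBot (WithTop ℝ)) := by
  choose w hw using fun x => WithBot.ne_bot_iff_exists.1 (hbot x)
  refine ⟨.of w ?_ ?_ ?_ ?_, fun x => (hw x).symm⟩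
  · exact WithBot.coe_injective ((hw 0).trans h0)
  · exact WithBot.coe_injective ((hw 1).trans h1)
  · intro x y
    have := hadd x y
    rw [← hw, ← hw, ← hw] at this
    exact WithBot.coe_le_coe.1 ((WithBot.coe_min _ _).trans_le this)
  · intro x y
    have := hmul x y
    rw [← hw, ← hw, ← hw] at this
    exact WithBot.coe_injective this

theorem pow_pow_add_eq_of_pow_succ_eq {M : Type*} [Monoid M] {p : ℕ} {f : ℕ → M}
    (hf : ∀ m, f (m + 1) ^ p = f m) (m k : ℕ) : f (m + k) ^ p ^ k = f m := by
  induction k with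
  | zero => simp
  | succ k ih => rw [← add_assoc, pow_succ', pow_mul, hf, ih]

theorem stmt5_general (p : ℕ) [Fact p.Prime] (K : Type) [Field K]
    (e : ℕ) (he : 0 < e)
    (v : AlgebraicClosure K → EReal)
    (hv0 : v 0 = ⊤)
    (hvbot : ∀ x : AlgebraicClosure K, v x ≠ ⊥)
    (hvmul : ∀ x y : AlgebraicClosure K, v (x * y) = v x + v y)
    (hvadd : ∀ x y : AlgebraicClosure K, min (v x) (v y) ≤ v (x + y))
    (hvp : v ((p : ℕ) : AlgebraicClosure K) = 1)
    (π : K)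
    (hπ : v (algebraMap K (AlgebraicClosure K) π) = (((e : ℝ)⁻¹ : ℝ) : EReal))
    (hdisc : ∀ y : K, y ≠ 0 →
      ∃ m : ℤ, v (algebraMap K (AlgebraicClosure K) y) = (((m : ℝ) / e : ℝ) : EReal))
    (πs : ℕ → AlgebraicClosure K)
    (hπ0 : πs 0 = algebraMap K (AlgebraicClosure K) π)
    (hπs : ∀ m, πs (m + 1) ^ p = πs m)
    (n : ℕ) (x : AlgebraicClosure K) (hx : x ∈ IntermediateField.adjoin K {πs n})
    (A : ℝ)
    (happrox : ∀ m : ℕ, ∃ y ∈ IntermediateField.adjoin K {πs m},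
      (((A - 1 / (p ^ m * ((p : ℝ) - 1))) : ℝ) : EReal) ≤ v (x - y)) :
    ∀ σ : AlgebraicClosure K ≃ₐ[K] AlgebraicClosure K, (A : EReal) ≤ v (σ x - x) := by
  intro σ
  have hp : p.Prime := Fact.out
  have hv1 : v 1 = 0 := by
    have h := hvmul p 1
    rw [mul_one, hvp, ← EReal.coe_one] at h
    rw [← EReal.add_sub_cancel_left (a := v 1) (b := 1), ← h, ← EReal.coe_sub, sub_self,
      EReal.coe_zero]
  obtain ⟨w, hw⟩ := exists_addValuation_eq_coe v hv0 hv1 hvbot hvmul hvadd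
  simp only [hw] at hπ hdisc hvp happrox ⊢
  have hpow := pow_pow_add_eq_of_pow_succ_eq hπs
  have ha : πs n ^ p ^ n = algebraMap K _ π := by simpa [hπ0] using hpow 0 n
  have hva : w (πs n) = ((1 / (e * p ^ n) : ℝ) : WithTop ℝ) := by
    have h := congrArg w ha
    rw [w.map_pow, WithBot.coe_injective hπ] at h
    rw [WithTop.eq_coe_div_of_nsmul_eq_coe (pow_ne_zero n hp.ne_zero) h]
    push_cast; field_simp
  refine WithBot.coe_le_coe.2 (w.le_map_algEquiv_apply_sub hp (WithBot.coe_injective hvp) he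
    (fun y hy => (hdisc y hy).imp fun m hm => WithBot.coe_injective hm) ha hva hx
    (fun m hm => ?_) σ)
  obtain ⟨y, hy, hxy⟩ := happrox m
  rw [← hpow m (n - m), Nat.add_sub_cancel' hm.le] at hy
  exact ⟨y, hy, WithBot.coe_le_coe.1 hxy⟩

/-- Setting: `K` finite totally ramified over `Frac W(k)` with index `e`, encoded by a
valuation `v` on an algebraic closure of `K` with `v p = 1`, `v π = 1/e`, `v(K^×) = (1/e)ℤ`;
`π_0 = π`, `π_{m+1}^p = π_m`, `K_m = K(π_m)`.  If `x ∈ K_n` is such that for every `m ∈ ℕ`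
there is `y_m ∈ K_m` with `v (x - y_m) ≥ A - 1/(p^m (p-1))`, then
`v (σ x - x) ≥ A` for every `σ ∈ Gal(K̄/K)`. -/
theorem stmt5 (p : ℕ) [Fact p.Prime] (K : Type) [Field K] [CharZero K]
    (e : ℕ) (he : 0 < e)
    (v : AlgebraicClosure K → EReal)
    (hv0 : v 0 = ⊤)
    (hvfin : ∀ x : AlgebraicClosure K, x ≠ 0 → v x ≠ ⊤)
    (hvbot : ∀ x : AlgebraicClosure K, v x ≠ ⊥)
    (hvmul : ∀ x y : AlgebraicClosure K, v (x * y) = v x + v y)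
    (hvadd : ∀ x y : AlgebraicClosure K, min (v x) (v y) ≤ v (x + y))
    (hvp : v ((p : ℕ) : AlgebraicClosure K) = 1)
    (π : K)
    (hπ : v (algebraMap K (AlgebraicClosure K) π) = (((e : ℝ)⁻¹ : ℝ) : EReal))
    (hdisc : ∀ y : K, y ≠ 0 →
      ∃ m : ℤ, v (algebraMap K (AlgebraicClosure K) y) = (((m : ℝ) / e : ℝ) : EReal))
    (πs : ℕ → AlgebraicClosure K)
    (hπ0 : πs 0 = algebraMap K (AlgebraicClosure K) π)
    (hπs : ∀ m, πs (m + 1) ^ p = πs m)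
    (n : ℕ) (x : AlgebraicClosure K) (hx : x ∈ IntermediateField.adjoin K {πs n})
    (A : ℝ)
    (happrox : ∀ m : ℕ, ∃ y ∈ IntermediateField.adjoin K {πs m},
      (((A - 1 / (p ^ m * ((p : ℝ) - 1))) : ℝ) : EReal) ≤ v (x - y)) :
    ∀ σ : AlgebraicClosure K ≃ₐ[K] AlgebraicClosure K, (A : EReal) ≤ v (σ x - x) :=
  stmt5_general p K e he v hv0 hvbot hvmul hvadd hvp π hπ hdisc πs hπ0 hπs n x hx A happrox
end
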